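/- Let M ≥ 1 and let R ∈ ℂ^{M×M} be a positive semidefinite Hermitian matrix all of whose diagonal entries are nonzero (hence real and positive). Then the matrix D + L is invertible and every eigenvalue λ of the Gauss–Seidel iteration matrix T^GS = (D+L)⁻¹·Lᴴ satisfies |λ| ≤ 1. -/

import Mathlib

open Matrix
open scoped ComplexOrder

/-!
`D + L` is lower triangular with the nonzero diagonal of `R`, hence invertible. For an eigenpair
`(λ, v)` of `(D + L)⁻¹ Lᴴ` put `d = vᴴ D v > 0` and `c = vᴴ L v`. The eigen equation
`Lᴴ v = λ (D + L) v` gives `c̄ = λ (d + c)`, while `0 ≤ vᴴ R v = d + 2 Re c` gives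
`|d + c|² - |c|² = d (d + 2 Re c) ≥ 0`; hence `|λ| = |c| / |d + c| ≤ 1`.
-/

open RCLike in
theorem norm_le_one_of_star_eq_mul_add {𝕜 : Type*} [RCLike 𝕜] {d c μ : 𝕜} (hd : 0 < d)
    (hq : 0 ≤ d + c + star c) (h : star c = μ * (d + c)) : ‖μ‖ ≤ 1 := by
  obtain ⟨r, hr, rfl⟩ := pos_iff_exists_ofReal.mp hd
  have hq' : 0 ≤ r + 2 * re c := by
    have := (nonneg_iff.mp hq).1
    simp only [map_add, ofReal_re, star_def, conj_re] at this
    linarith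
  have hre : 0 < re ((r : 𝕜) + c) := by rw [map_add, ofReal_re]; linarith
  have hne : (r : 𝕜) + c ≠ 0 := fun h0 => by simp [h0] at hre
  have hle : ‖c‖ ≤ ‖(r : 𝕜) + c‖ := by
    rw [← sq_le_sq₀ (norm_nonneg _) (norm_nonneg _), norm_sq_eq_def, norm_sq_eq_def]
    simp only [map_add, ofReal_re, ofReal_im, zero_add]
    nlinarith
  have hpos : 0 < ‖(r : 𝕜) + c‖ := norm_pos_iff.mpr hne
  calc ‖μ‖ = ‖c‖ / ‖(r : 𝕜) + c‖ := by
        rw [eq_div_iff hpos.ne', ← norm_mul, ← h, norm_star]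
    _ ≤ 1 := (div_le_one hpos).mpr hle

namespace Matrix

variable {n α : Type*}

theorem IsHermitian.eq_diagonal_add_add_conjTranspose [LinearOrder n] [AddMonoid α]
    [StarAddMonoid α] {A L : Matrix n n α} (hA : A.IsHermitian)
    (hL : ∀ i j, L i j = if j < i then A i j else 0) :
    A = diagonal (fun i => A i i) + L + Lᴴ := by
  ext i j
  simp only [add_apply, conjTranspose_apply, hL, diagonal_apply]
  rcases lt_trichotomy i j with h | rfl | h
  · simp [h.ne, h.not_gt, h, hA.apply i j]
  · simp
  · simp [h.ne', h, h.not_gt]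

theorem isUnit_diagonal_add_of_isUnit_diag [Fintype n] [LinearOrder n] [CommRing α]
    {A L : Matrix n n α} (hdiag : ∀ i, IsUnit (A i i))
    (hL : ∀ i j, L i j = if j < i then A i j else 0) :
    IsUnit (diagonal (fun i => A i i) + L) := by
  have hlower : (diagonal (fun i => A i i) + L).IsLowerTriangular := fun i j hij => by
    have hij : i < j := hij
    simp [hL, hij.ne, hij.not_gt]
  rw [isUnit_iff_isUnit_det, det_of_isLowerTriangular _ hlower]
  exact IsUnit.prod_univ_iff.mpr fun i => by simpa [hL] using hdiag i

theorem mulVec_eq_smul_mulVec_of_nonsing_inv_mul [Fintype n] [DecidableEq n] [CommRing α]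
    {A B : Matrix n n α} (hA : IsUnit A) {μ : α} {v : n → α} (h : (A⁻¹ * B) *ᵥ v = μ • v) :
    B *ᵥ v = μ • (A *ᵥ v) := by
  rw [← mulVec_smul, ← h, mulVec_mulVec, ← Matrix.mul_assoc,
    mul_nonsing_inv _ ((isUnit_iff_isUnit_det A).mp hA), Matrix.one_mul]

theorem star_dotProduct_conjTranspose_mulVec [Fintype n] [CommSemiring α] [StarRing α]
    (A : Matrix n n α) (v : n → α) :
    star v ⬝ᵥ (Aᴴ *ᵥ v) = star (star v ⬝ᵥ (A *ᵥ v)) := by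
  rw [dotProduct_mulVec, ← star_mulVec, star_dotProduct]

end Matrix

theorem gauss_seidel_spectral_radius_le_one_of_posSemidef_general
    (M : ℕ) (R : Matrix (Fin M) (Fin M) ℂ) (hR : R.PosSemidef)
    (hdiag : ∀ i, R i i ≠ 0)
    (D L : Matrix (Fin M) (Fin M) ℂ)
    (hD : D = Matrix.diagonal (fun i => R i i))
    (hL : ∀ i j, L i j = if j < i then R i j else 0) :
    IsUnit (D + L) ∧
      ∀ (lam : ℂ) (v : Fin M → ℂ), v ≠ 0 →
        ((D + L)⁻¹ * Lᴴ) *ᵥ v = lam • v → ‖lam‖ ≤ 1 := by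
  subst hD
  have hunit := isUnit_diagonal_add_of_isUnit_diag (fun i => (hdiag i).isUnit) hL
  refine ⟨hunit, fun lam v hv hev => ?_⟩
  have hDpos : (diagonal fun i => R i i).PosDef :=
    posDef_diagonal_iff.mpr fun i => hR.diag_nonneg.lt_of_ne' (hdiag i)
  have heig := mulVec_eq_smul_mulVec_of_nonsing_inv_mul hunit hev
  have hsplit := hR.isHermitian.eq_diagonal_add_add_conjTranspose hL
  refine norm_le_one_of_star_eq_mul_add (hDpos.dotProduct_mulVec_pos hv)
    (c := star v ⬝ᵥ (L *ᵥ v)) ?_ ?_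
  · have := hR.dotProduct_mulVec_nonneg v
    rwa [hsplit, add_mulVec, add_mulVec, dotProduct_add, dotProduct_add,
      star_dotProduct_conjTranspose_mulVec] at this
  · rw [← star_dotProduct_conjTranspose_mulVec, heig, dotProduct_smul, add_mulVec,
      dotProduct_add, smul_eq_mul]

/-- Gauss–Seidel for positive semidefinite Hermitian matrices with nonzero diagonal:
`D + L` is invertible and every eigenvalue of `(D+L)⁻¹ * Lᴴ` has absolute value `≤ 1`. -/
theorem gauss_seidel_spectral_radius_le_one_of_posSemidef
    (M : ℕ) (hM : 1 ≤ M) (R : Matrix (Fin M) (Fin M) ℂ) (hR : R.PosSemidef)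
    (hdiag : ∀ i, R i i ≠ 0)
    (D L : Matrix (Fin M) (Fin M) ℂ)
    (hD : D = Matrix.diagonal (fun i => R i i))
    (hL : ∀ i j, L i j = if j < i then R i j else 0) :
    IsUnit (D + L) ∧
      ∀ (lam : ℂ) (v : Fin M → ℂ), v ≠ 0 →
        ((D + L)⁻¹ * Lᴴ) *ᵥ v = lam • v → ‖lam‖ ≤ 1 :=
  gauss_seidel_spectral_radius_le_one_of_posSemidef_general M R hR hdiag D L hD hL
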